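/- arXiv:1701.07242 — 3 statements merged into one kernel-verified Lean document; each statement's English description precedes it below -/
import Mathlib

section
/- The treewidth of the primal graph is at most (tw_i + 1) · max_i |J(i)| − 1, where tw_i is the treewidth of the incidence graph and J(i) is the set of jobs processable on machine i. -/
open Finset

/-- The primal graph: vertices are jobs, distinct jobs adjacent iff a common machine exists. -/
def primalGraph {J I : Type} [DecidableEq I] (Mach : J → Finset I) : SimpleGraph J where
  Adj j j' := j ≠ j' ∧ (Mach j ∩ Mach j').Nonempty
  symm := by
    constructor
    intro a b h
    exact ⟨Ne.symm h.1, by rw [Finset.inter_comm]; exact h.2⟩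
  loopless := ⟨fun a h => h.1 rfl⟩

/-- The dual graph: vertices are machines, distinct machines adjacent iff a common job exists. -/
def dualGraph {J I : Type} [DecidableEq I] (Mach : J → Finset I) : SimpleGraph I where
  Adj i i' := i ≠ i' ∧ ∃ j, i ∈ Mach j ∧ i' ∈ Mach j
  symm := by
    constructor
    rintro a b ⟨h1, j, hj1, hj2⟩
    exact ⟨h1.symm, j, hj2, hj1⟩
  loopless := ⟨fun a h => h.1 rfl⟩

/-- The incidence graph: bipartite on jobs and machines, job `j` adjacent to machine `i`
iff `i ∈ M(j)`. -/
def incidenceGraph {J I : Type} [DecidableEq I] (Mach : J → Finset I) : SimpleGraph (J ⊕ I) where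
  Adj x y := (∃ j i, x = Sum.inl j ∧ y = Sum.inr i ∧ i ∈ Mach j) ∨
             (∃ j i, x = Sum.inr i ∧ y = Sum.inl j ∧ i ∈ Mach j)
  symm := by
    constructor
    rintro x y (⟨j, i, rfl, rfl, h⟩ | ⟨j, i, rfl, rfl, h⟩)
    · exact Or.inr ⟨j, i, rfl, rfl, h⟩
    · exact Or.inl ⟨j, i, rfl, rfl, h⟩
  loopless := by
    constructor
    rintro x (⟨j, i, h1, h2, _⟩ | ⟨j, i, h1, h2, _⟩) <;> subst h1 <;> simp_all

/-- A tree decomposition of a graph `G`. -/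
structure TreeDecomp (V : Type) (G : SimpleGraph V) (ι : Type) where
  T : SimpleGraph ι
  isTree : T.IsTree
  bag : ι → Finset V
  cover : ∀ v, ∃ t, v ∈ bag t
  edgecover : ∀ ⦃u v⦄, G.Adj u v → ∃ t, u ∈ bag t ∧ v ∈ bag t
  conn : ∀ v, (T.induce {t | v ∈ bag t}).Connected

/-- The treewidth of a graph. -/
noncomputable def treewidth {V : Type} (G : SimpleGraph V) : ℕ :=
  sInf {k | ∃ (ι : Type) (d : TreeDecomp V G ι), ∀ t, (d.bag t).card ≤ k + 1}

/-!
Replace, in every bag of a tree decomposition of the incidence graph, each job by itself and each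
machine `i` by `J(i)`. Bags grow by a factor of at most `max_i |J(i)|` (a job lies in some `J(i)`),
and two jobs sharing a machine `i` meet in every bag that contained `i`. The bags now containing a
job `j` are those that contained `j` or one of its machines; each machine's subtree meets that of
`j` since the two are adjacent, so together they still form a subtree.
-/

open SimpleGraph

namespace TreeDecomp

variable {V W ι : Type} {G : SimpleGraph V} {H : SimpleGraph W}

def univ [Fintype V] (G : SimpleGraph V) : TreeDecomp V G Unit where
  T := ⊥
  isTree := .of_subsingleton
  bag _ := Finset.univ
  cover v := ⟨(), mem_univ v⟩
  edgecover u v _ := ⟨(), mem_univ u, mem_univ v⟩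
  conn v := @Connected.of_subsingleton _ _ ⟨⟨(), mem_univ v⟩⟩ _

section expand

variable [DecidableEq W] (d : TreeDecomp V G ι) (f : V → Finset W) (c : W → V)
  (hc : ∀ w, w ∈ f (c w)) (hstar : ∀ w v, w ∈ f v → v = c w ∨ G.Adj (c w) v)
  (hedge : ∀ ⦃w w'⦄, H.Adj w w' → ∃ v, w ∈ f v ∧ w' ∈ f v)

def expand : TreeDecomp W H ι where
  T := d.T
  isTree := d.isTree
  bag t := (d.bag t).biUnion f
  cover w :=
    let ⟨t, ht⟩ := d.cover (c w)
    ⟨t, mem_biUnion.2 ⟨c w, ht, hc w⟩⟩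
  edgecover w w' h :=
    let ⟨v, hw, hw'⟩ := hedge h
    let ⟨t, ht⟩ := d.cover v
    ⟨t, mem_biUnion.2 ⟨v, ht, hw⟩, mem_biUnion.2 ⟨v, ht, hw'⟩⟩
  conn w := by
    obtain ⟨t₀, ht₀⟩ := d.cover (c w)
    refine induce_connected_of_patches t₀ (mem_biUnion.2 ⟨c w, ht₀, hc w⟩) fun {t} ht => ?_
    obtain ⟨v, hv, hwv⟩ := mem_biUnion.1 ht
    refine ⟨{s | c w ∈ d.bag s} ∪ {s | v ∈ d.bag s}, ?_, Or.inl ht₀, Or.inr hv, ?_⟩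
    · rintro s (hs | hs)
      exacts [mem_biUnion.2 ⟨_, hs, hc w⟩, mem_biUnion.2 ⟨_, hs, hwv⟩]
    · have hmeet : ({s | c w ∈ d.bag s} ∩ {s | v ∈ d.bag s}).Nonempty := by
        rcases hstar w v hwv with rfl | hadj
        · exact ⟨t₀, ht₀, ht₀⟩
        · exact d.edgecover hadj
      exact (induce_union_connected (d.conn _).preconnected (d.conn v).preconnected
        hmeet).preconnected _ _

lemma card_bag_expand_le {m : ℕ} (hm : ∀ v, (f v).card ≤ m) (t : ι) :
    ((d.expand f c hc hstar hedge).bag t).card ≤ (d.bag t).card * m :=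
  card_biUnion_le_card_mul _ _ _ fun v _ => hm v

end expand

end TreeDecomp

lemma treewidth_le_of_bag_card_le {V ι : Type} {G : SimpleGraph V} {k : ℕ}
    (d : TreeDecomp V G ι) (h : ∀ t, (d.bag t).card ≤ k + 1) : treewidth G ≤ k :=
  Nat.sInf_le (Set.mem_ofPred.2 ⟨ι, d, h⟩)

lemma exists_treeDecomp_bag_card_le_treewidth {V : Type} [Fintype V] (G : SimpleGraph V) :
    ∃ (ι : Type) (d : TreeDecomp V G ι), ∀ t, (d.bag t).card ≤ treewidth G + 1 :=
  Nat.sInf_mem (s := {k | ∃ (ι : Type) (d : TreeDecomp V G ι), ∀ t, (d.bag t).card ≤ k + 1})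
    ⟨Fintype.card V, Unit, TreeDecomp.univ G, fun _ => Nat.le_succ _⟩

lemma treewidth_le_of_expand {V W : Type} [Fintype V] [DecidableEq W] {G : SimpleGraph V}
    {H : SimpleGraph W} (f : V → Finset W) (c : W → V) (hc : ∀ w, w ∈ f (c w))
    (hstar : ∀ w v, w ∈ f v → v = c w ∨ G.Adj (c w) v)
    (hedge : ∀ ⦃w w'⦄, H.Adj w w' → ∃ v, w ∈ f v ∧ w' ∈ f v) {m : ℕ}
    (hm : ∀ v, (f v).card ≤ m) :
    treewidth H ≤ (treewidth G + 1) * m - 1 := by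
  obtain ⟨ι, d, hd⟩ := exists_treeDecomp_bag_card_le_treewidth G
  refine treewidth_le_of_bag_card_le (d.expand f c hc hstar hedge) fun t => ?_
  have := (d.card_bag_expand_le f c hc hstar hedge hm t).trans (Nat.mul_le_mul_right m (hd t))
  omega

section scheduling

variable {J I : Type} [Fintype J] [DecidableEq I] (Mach : J → Finset I)

/-- `J(i)` -/
def jobsOn (i : I) : Finset J := Finset.univ.filter fun j => i ∈ Mach j

def incidenceToJobs : J ⊕ I → Finset J := Sum.elim (fun j => {j}) (jobsOn Mach)

@[simp] lemma mem_jobsOn {i : I} {j : J} : j ∈ jobsOn Mach i ↔ i ∈ Mach j := by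
  simp [jobsOn]

lemma eq_inl_or_adj_of_mem_incidenceToJobs {j : J} {x : J ⊕ I}
    (h : j ∈ incidenceToJobs Mach x) :
    x = Sum.inl j ∨ (incidenceGraph Mach).Adj (Sum.inl j) x := by
  rcases x with j' | i
  · exact .inl (by simpa [incidenceToJobs, eq_comm] using h)
  · exact .inr (.inl ⟨j, i, rfl, rfl, by simpa [incidenceToJobs] using h⟩)

lemma exists_mem_incidenceToJobs_of_adj {j j' : J} (h : (primalGraph Mach).Adj j j') :
    ∃ x, j ∈ incidenceToJobs Mach x ∧ j' ∈ incidenceToJobs Mach x := by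
  obtain ⟨i, hi⟩ := h.2
  exact ⟨Sum.inr i, by simpa [incidenceToJobs] using mem_inter.1 hi⟩

lemma card_incidenceToJobs_le [Fintype I] (hfeas : ∀ j, (Mach j).Nonempty) (x : J ⊕ I) :
    (incidenceToJobs Mach x).card ≤ Finset.univ.sup fun i => (jobsOn Mach i).card := by
  rcases x with j | i
  · obtain ⟨i, hi⟩ := hfeas j
    calc (incidenceToJobs Mach (.inl j)).card = 1 := card_singleton j
      _ ≤ (jobsOn Mach i).card := card_pos.2 ⟨j, (mem_jobsOn Mach).2 hi⟩
      _ ≤ _ := le_sup (f := fun i => (jobsOn Mach i).card) (mem_univ i)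
  · exact le_sup (f := fun i => (jobsOn Mach i).card) (mem_univ i)

end scheduling

/-- The treewidth of the primal graph is at most `(tw_i + 1) · max_i |J(i)| − 1`, where
`tw_i` is the treewidth of the incidence graph and `J(i)` the set of jobs processable
on machine `i`. -/
theorem treewidth_primal_le_incidence
    {J I : Type} [Fintype J] [DecidableEq J] [Fintype I] [DecidableEq I]
    (Mach : J → Finset I) (hfeas : ∀ j, (Mach j).Nonempty) :
    treewidth (primalGraph Mach) ≤
      (treewidth (incidenceGraph Mach) + 1) *
        (Finset.univ.sup fun i : I => (Finset.univ.filter fun j => i ∈ Mach j).card) - 1 :=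
  treewidth_le_of_expand (incidenceToJobs Mach) Sum.inl (fun _ => mem_singleton_self _)
    (fun _ _ => eq_inl_or_adj_of_mem_incidenceToJobs Mach)
    (fun _ _ => exists_mem_incidenceToJobs_of_adj Mach) (card_incidenceToJobs_le Mach hfeas)
end

section
/- With definitions as for the primal-graph dynamic program, for an internal node t with children ℓ and r, the inactive machine sets of the two children (together with their nearly inactive machines) are disjoint: (I_M(ℓ) ∪ N_M(ℓ)) ∩ (I_M(r) ∪ N_M(r)) = ∅. -/
open Finset

/-- A rooted tree decomposition of a graph `G`: nodes `ι` with a parent function whose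
iteration reaches the root, bags covering all vertices and all edges, and for each
vertex `v` the set of nodes whose bag contains `v` forms a connected subtree (expressed
by path-convexity `conn` together with the existence of common ancestors `top`). -/
structure RootedTreeDecomp (V : Type) (G : SimpleGraph V) (ι : Type) where
  parent : ι → ι
  root : ι
  parent_root : parent root = root
  reach : ∀ t, ∃ n, parent^[n] t = root
  bag : ι → Set V
  cover : ∀ v, ∃ t, v ∈ bag t
  edgecover : ∀ ⦃u v⦄, G.Adj u v → ∃ t, u ∈ bag t ∧ v ∈ bag t
  conn : ∀ v t₁ s t₂, v ∈ bag t₁ → v ∈ bag t₂ →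
    (∃ n, parent^[n] t₁ = s) → (∃ n, parent^[n] s = t₂) → v ∈ bag s
  top : ∀ v t₁ t₂, v ∈ bag t₁ → v ∈ bag t₂ →
    ∃ m, (∃ n, parent^[n] t₁ = m) ∧ (∃ n, parent^[n] t₂ = m) ∧ v ∈ bag m

variable {V ι : Type} {G : SimpleGraph V}

/-- `t'` is a descendant of `t` (including `t` itself). -/
def RootedTreeDecomp.Desc (d : RootedTreeDecomp V G ι) (t' t : ι) : Prop :=
  ∃ n, d.parent^[n] t' = t

section Primal

variable {J I : Type} [DecidableEq I] {Mach : J → Finset I}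

/-- Active jobs at node `t`: the jobs in the bag `X_t`. -/
def activeJobs (d : RootedTreeDecomp J (primalGraph Mach) ι) (t : ι) : Set J := d.bag t

/-- Inactive jobs at node `t`: jobs not in `X_t` lying in the bag of a descendant of `t`. -/
def inactiveJobs (d : RootedTreeDecomp J (primalGraph Mach) ι) (t : ι) : Set J :=
  {j | j ∉ d.bag t ∧ ∃ t', d.Desc t' t ∧ j ∈ d.bag t'}

/-- Nearly inactive jobs at node `t`: active at `t` but not at its parent. -/
def nearlyInactiveJobs (d : RootedTreeDecomp J (primalGraph Mach) ι) (t : ι) : Set J :=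
  d.bag t \ d.bag (d.parent t)

/-- Inactive machines at `t`: machines on which some inactive job may be processed. -/
def inactiveMachs (d : RootedTreeDecomp J (primalGraph Mach) ι) (t : ι) : Set I :=
  {i | ∃ j ∈ inactiveJobs d t, i ∈ Mach j}

/-- Nearly inactive machines at `t`: machines of nearly inactive jobs that are not inactive. -/
def nearlyInactiveMachs (d : RootedTreeDecomp J (primalGraph Mach) ι) (t : ι) : Set I :=
  {i | ∃ j ∈ nearlyInactiveJobs d t, i ∈ Mach j} \ inactiveMachs d t

end Primal

/-! A machine shared by the two sides is shared by two jobs `j` (below `ℓ`, not in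
`X_t`) and `j'` (below `r`, not in `X_t`). By the subtree property every bag containing `j` lies
below `ℓ`, and every bag containing `j'` lies below `r`. But `j` and `j'` share a machine, so
they are equal or adjacent in the primal graph, hence some bag contains both; that bag would lie
below both siblings. -/

namespace RootedTreeDecomp

variable (d : RootedTreeDecomp V G ι)

theorem Desc.refl (t : ι) : d.Desc t t := ⟨0, rfl⟩

variable {d}

theorem Desc.trans {s t u : ι} (hst : d.Desc s t) (htu : d.Desc t u) : d.Desc s u := by
  obtain ⟨m, rfl⟩ := hst
  obtain ⟨n, rfl⟩ := htu
  exact ⟨n + m, Function.iterate_add_apply _ _ _ _⟩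

theorem desc_parent (t : ι) : d.Desc t (d.parent t) := ⟨1, rfl⟩

theorem Desc.total {s t u : ι} (ht : d.Desc s t) (hu : d.Desc s u) :
    d.Desc t u ∨ d.Desc u t := by
  obtain ⟨m, rfl⟩ := ht
  obtain ⟨n, rfl⟩ := hu
  rcases le_total m n with h | h
  · exact Or.inl ⟨n - m, by rw [← Function.iterate_add_apply, Nat.sub_add_cancel h]⟩
  · exact Or.inr ⟨m - n, by rw [← Function.iterate_add_apply, Nat.sub_add_cancel h]⟩

theorem Desc.eq_or_parent_desc {s t : ι} (h : d.Desc s t) : s = t ∨ d.Desc (d.parent s) t := by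
  obtain ⟨_ | n, rfl⟩ := h
  · exact Or.inl rfl
  · exact Or.inr ⟨n, (Function.iterate_succ_apply _ _ _).symm⟩

/-- Since every node reaches the root, a node on a cycle of `parent` is the root. -/
theorem eq_root_of_desc_of_parent {t : ι} (h : d.Desc (d.parent t) t) : t = d.root := by
  obtain ⟨p, hp⟩ := h
  have hcyc : d.parent^[p + 1] t = t := hp
  obtain ⟨n, hn⟩ := d.reach t
  have hle : n ≤ (p + 1) * n := Nat.le_mul_of_pos_left n p.succ_pos
  calc t = d.parent^[(p + 1) * n] t := (Function.IsPeriodicPt.mul_const hcyc n).symm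
    _ = d.parent^[(p + 1) * n - n] (d.parent^[n] t) := by
        rw [← Function.iterate_add_apply, Nat.sub_add_cancel hle]
    _ = d.root := by rw [hn, Function.iterate_fixed d.parent_root]

theorem Desc.eq_of_parent_eq {l r : ι} (h : d.Desc l r) (hlr : d.parent l = d.parent r)
    (hr : r ≠ d.parent r) : l = r := by
  refine h.eq_or_parent_desc.resolve_right fun hpr => hr ?_
  have hroot : r = d.root := eq_root_of_desc_of_parent (hlr ▸ hpr)
  rw [hroot, d.parent_root]

theorem not_desc_of_siblings {t l r u : ι} (hl : d.parent l = t) (hr : d.parent r = t)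
    (hlr : l ≠ r) (hlt : l ≠ t) (hrt : r ≠ t) (hul : d.Desc u l) (hur : d.Desc u r) : False := by
  rcases hul.total hur with h | h
  · exact hlr (h.eq_of_parent_eq (hl.trans hr.symm) (hr ▸ hrt))
  · exact hlr (h.eq_of_parent_eq (hr.trans hl.symm) (hl ▸ hlt)).symm

theorem desc_of_mem_bag {v : V} {s l u : ι} (hsl : d.Desc s l) (hvs : v ∈ d.bag s)
    (hvp : v ∉ d.bag (d.parent l)) (hvu : v ∈ d.bag u) : d.Desc u l := by
  obtain ⟨m, hsm, hum, hvm⟩ := d.top v s u hvs hvu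
  rcases Desc.total (d := d) hsm hsl with hml | hlm
  · exact Desc.trans hum hml
  rcases hlm.eq_or_parent_desc with rfl | hpm
  · exact hum
  · exact absurd (d.conn v s (d.parent l) m hvs hvm (hsl.trans (desc_parent l)) hpm) hvp

end RootedTreeDecomp

section Primal

variable {J I : Type} [DecidableEq I] {Mach : J → Finset I}

theorem exists_bag_of_mem_mach_of_mem_mach (d : RootedTreeDecomp J (primalGraph Mach) ι)
    {i : I} {j j' : J} (hj : i ∈ Mach j) (hj' : i ∈ Mach j') : ∃ u, j ∈ d.bag u ∧ j' ∈ d.bag u := by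
  by_cases hjj : j = j'
  · obtain ⟨u, hu⟩ := d.cover j
    exact ⟨u, hu, hjj ▸ hu⟩
  · exact d.edgecover ⟨hjj, i, Finset.mem_inter.2 ⟨hj, hj'⟩⟩

theorem exists_job_confined_of_mem_inactiveMachs_union
    {d : RootedTreeDecomp J (primalGraph Mach) ι} {l : ι} {i : I}
    (hi : i ∈ inactiveMachs d l ∪ nearlyInactiveMachs d l) :
    ∃ j, i ∈ Mach j ∧ ∀ u, j ∈ d.bag u → d.Desc u l := by
  rcases hi with ⟨j, ⟨hjl, s, hsl, hjs⟩, hij⟩ | ⟨⟨j, ⟨hjl, hjp⟩, hij⟩, -⟩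
  · have hjp : j ∉ d.bag (d.parent l) := fun hjp =>
      hjl (d.conn j s l (d.parent l) hjs hjp hsl (RootedTreeDecomp.desc_parent l))
    exact ⟨j, hij, fun u => RootedTreeDecomp.desc_of_mem_bag hsl hjs hjp⟩
  · exact ⟨j, hij, fun u => RootedTreeDecomp.desc_of_mem_bag (.refl d l) hjl hjp⟩

end Primal

theorem inactiveMachs_children_disjoint_general
    {J I : Type} [DecidableEq I] (Mach : J → Finset I) {ι : Type}
    (d : RootedTreeDecomp J (primalGraph Mach) ι) (t l r : ι)
    (hl : d.parent l = t) (hr : d.parent r = t)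
    (hlr : l ≠ r) (hlt : l ≠ t) (hrt : r ≠ t) :
    (inactiveMachs d l ∪ nearlyInactiveMachs d l) ∩
      (inactiveMachs d r ∪ nearlyInactiveMachs d r) = ∅ := by
  refine Set.eq_empty_iff_forall_notMem.2 fun i ⟨hil, hir⟩ => ?_
  obtain ⟨j, hij, hjl⟩ := exists_job_confined_of_mem_inactiveMachs_union hil
  obtain ⟨j', hij', hj'r⟩ := exists_job_confined_of_mem_inactiveMachs_union hir
  obtain ⟨u, hju, hj'u⟩ := exists_bag_of_mem_mach_of_mem_mach d hij hij'
  exact d.not_desc_of_siblings hl hr hlr hlt hrt (hjl u hju) (hj'r u hj'u)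

/-- At an internal node `t` with children `ℓ` and `r` of a rooted binary tree
decomposition of the primal graph, the (nearly) inactive machine sets of the two
children are disjoint. -/
theorem inactiveMachs_children_disjoint
    {J I : Type} [DecidableEq I] (Mach : J → Finset I) {ι : Type}
    (d : RootedTreeDecomp J (primalGraph Mach) ι) (t l r : ι)
    (hl : d.parent l = t) (hr : d.parent r = t)
    (hlr : l ≠ r) (hlt : l ≠ t) (hrt : r ≠ t)
    (hbin : ∀ s, d.parent s = t → s ≠ t → s = l ∨ s = r) :
    (inactiveMachs d l ∪ nearlyInactiveMachs d l) ∩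
      (inactiveMachs d r ∪ nearlyInactiveMachs d r) = ∅ :=
  inactiveMachs_children_disjoint_general Mach d t l r hl hr hlr hlt hrt
end

section
/- With definitions as for the primal-graph dynamic program, every job processable by a machine in N_M(t) is active at t: for all i ∈ N_M(t), J(i) ⊆ A_J(t). -/
open Finset

variable {V ι : Type} {G : SimpleGraph V}

/-!
If `j₀` is active at `t` but not at its parent, then `t` is the top of the subtree of nodes whose
bags contain `j₀`, so every bag containing `j₀` lies below `t`. A job `j` sharing a machine `i`
with `j₀` meets `j₀` in some bag, hence appears in a bag below `t`; were `j` not in `X_t`, it would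
be inactive at `t` and so would `i`.
-/

namespace RootedTreeDecomp

theorem desc_refl (d : RootedTreeDecomp V G ι) (t : ι) : d.Desc t t := ⟨0, rfl⟩

theorem eq_of_desc_of_mem_bag_of_not_mem_bag_parent (d : RootedTreeDecomp V G ι) {v : V}
    {t m : ι} (hvt : v ∈ d.bag t) (hvp : v ∉ d.bag (d.parent t)) (hvm : v ∈ d.bag m)
    (htm : d.Desc t m) : m = t := by
  obtain ⟨n, hn⟩ := htm
  cases n with
  | zero => exact hn.symm
  | succ k =>
    refine absurd (d.conn v t (d.parent t) m hvt hvm ⟨1, rfl⟩ ⟨k, ?_⟩) hvp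
    rwa [← Function.iterate_succ_apply]

theorem desc_of_mem_bag_of_not_mem_bag_parent (d : RootedTreeDecomp V G ι) {v : V}
    {s t : ι} (hvt : v ∈ d.bag t) (hvp : v ∉ d.bag (d.parent t)) (hvs : v ∈ d.bag s) :
    d.Desc s t := by
  obtain ⟨m, hsm, htm, hvm⟩ := d.top v s t hvs hvt
  rwa [← d.eq_of_desc_of_mem_bag_of_not_mem_bag_parent hvt hvp hvm htm]

end RootedTreeDecomp

section Primal

variable {J I : Type} [DecidableEq I] {Mach : J → Finset I}

theorem primalGraph_adj_of_mem {j j' : J} {i : I} (hne : j ≠ j') (hj : i ∈ Mach j)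
    (hj' : i ∈ Mach j') : (primalGraph Mach).Adj j j' :=
  ⟨hne, i, Finset.mem_inter.mpr ⟨hj, hj'⟩⟩

theorem exists_desc_mem_bag_of_mem_mach_nearlyInactiveJob
    (d : RootedTreeDecomp J (primalGraph Mach) ι) {t : ι} {i : I} {j₀ j : J}
    (hj₀ : j₀ ∈ nearlyInactiveJobs d t) (hij₀ : i ∈ Mach j₀) (hij : i ∈ Mach j) :
    ∃ s, d.Desc s t ∧ j ∈ d.bag s := by
  obtain ⟨hj₀t, hj₀p⟩ := hj₀
  by_cases hjj₀ : j = j₀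
  · exact ⟨t, d.desc_refl t, hjj₀ ▸ hj₀t⟩
  obtain ⟨s, hjs, hj₀s⟩ := d.edgecover (primalGraph_adj_of_mem hjj₀ hij hij₀)
  exact ⟨s, d.desc_of_mem_bag_of_not_mem_bag_parent hj₀t hj₀p hj₀s, hjs⟩

end Primal

/-- Every job processable by a nearly inactive machine of `t` is active at `t`:
for all `i ∈ N_M(t)`, `J(i) ⊆ A_J(t)`. -/
theorem jobs_of_nearlyInactive_machs_active
    {J I : Type} [DecidableEq I] (Mach : J → Finset I) {ι : Type}
    (d : RootedTreeDecomp J (primalGraph Mach) ι) (t : ι) :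
    ∀ i ∈ nearlyInactiveMachs d t, ∀ j, i ∈ Mach j → j ∈ activeJobs d t := by
  rintro i ⟨⟨j₀, hj₀, hij₀⟩, hi_not_inactive⟩ j hij
  by_contra hjt
  obtain ⟨s, hst, hjs⟩ := exists_desc_mem_bag_of_mem_mach_nearlyInactiveJob d hj₀ hij₀ hij
  exact hi_not_inactive ⟨j, ⟨hjt, s, hst, hjs⟩, hij⟩
end
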